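/- Soundness of the multicut reduction: Let G be a simple graph and H a subgraph of G on the same vertex set (every edge of H is an edge of G). Let s be a vertex of G, and let (s_1, t_1), ..., (s_k, t_k) be pairs of vertices. Suppose that for each i there exist m pairwise edge-disjoint walks from s to s_i in G. Let I be a set of edges of G with |I| < m, and suppose that for every i, the vertex t_i is not reachable from s in G \ I. Then for every i, the vertex t_i is not reachable from s_i in H \ I; that is, the edge set I ∩ E(H) is a multicut of H separating every pair (s_i, t_i). -/

import Mathlib

/-!
By pigeonhole, fewer than `m` edges cannot meet all of `m` edge-disjoint walks from `s` to
`src i`, so `src i` stays reachable from `s` in `G \ I`. As `H \ I ≤ G \ I`, a walk from `src i`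
to `snk i` in `H \ I` would then connect `s` to `snk i` in `G \ I`.
-/

open Finset

namespace SimpleGraph

lemma exists_walk_edges_disjoint_of_card_lt {V ι : Type*} [Fintype ι] {G : SimpleGraph V}
    {u v : V} {W : ι → G.Walk u v}
    (hW : Pairwise fun a b => ∀ e ∈ (W a).edges, e ∉ (W b).edges)
    {I : Finset (Sym2 V)} (hI : #I < Fintype.card ι) :
    ∃ a, ∀ e ∈ (W a).edges, e ∉ I := by
  by_contra! hhit
  choose e heW heI using hhit
  obtain ⟨a, -, b, -, hab, heq⟩ :=
    exists_ne_map_eq_of_card_lt_of_maps_to (s := univ) (t := I) hI fun a _ => heI a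
  exact hW hab (e a) (heW a) (heq ▸ heW b)

end SimpleGraph

theorem multicut_reduction_sound_general
    {V : Type*} (G H : SimpleGraph V) (hle : H ≤ G)
    (s : V) (k : ℕ) (src snk : Fin k → V) (m : ℕ)
    (hwalks : ∀ i, ∃ W : Fin m → G.Walk s (src i),
      ∀ a b, a ≠ b → ∀ e, e ∈ (W a).edges → e ∉ (W b).edges)
    (I : Finset (Sym2 V)) (hcard : I.card < m)
    (hsep : ∀ i, ¬ (G.deleteEdges ↑I).Reachable s (snk i)) :
    ∀ i, ¬ (H.deleteEdges ↑I).Reachable (src i) (snk i) := by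
  intro i hH
  obtain ⟨W, hdisj⟩ := hwalks i
  obtain ⟨a, ha⟩ := SimpleGraph.exists_walk_edges_disjoint_of_card_lt hdisj
    (I := I) (by simpa using hcard)
  have hsrc : (G.deleteEdges ↑I).Reachable s (src i) := ((W a).toDeleteEdges _ ha).reachable
  exact hsep i (hsrc.trans (hH.mono (SimpleGraph.deleteEdges_mono hle)))

/-- Soundness of the multicut reduction: if `H ≤ G`, for each `i` there are `m` pairwise
edge-disjoint walks from `s` to `src i` in `G`, `I` is a set of edges of `G` with `|I| < m`,
and no `snk i` is reachable from `s` in `G \ I`, then no `snk i` is reachable from `src i`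
in `H \ I`, i.e. `I` is a multicut of `H` for the pairs `(src i, snk i)`. -/
theorem multicut_reduction_sound
    {V : Type*} (G H : SimpleGraph V) (hle : H ≤ G)
    (s : V) (k : ℕ) (src snk : Fin k → V) (m : ℕ)
    (hwalks : ∀ i, ∃ W : Fin m → G.Walk s (src i),
      ∀ a b, a ≠ b → ∀ e, e ∈ (W a).edges → e ∉ (W b).edges)
    (I : Finset (Sym2 V)) (hIE : ↑I ⊆ G.edgeSet) (hcard : I.card < m)
    (hsep : ∀ i, ¬ (G.deleteEdges ↑I).Reachable s (snk i)) :
    ∀ i, ¬ (H.deleteEdges ↑I).Reachable (src i) (snk i) :=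
  multicut_reduction_sound_general G H hle s k src snk m hwalks I hcard hsep
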